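/- N(Γ₁(5)) = 2: the set of cosets P·SL₂(ℤ) in SL₂(ℝ)/SL₂(ℤ) such that P⁻¹·A·P has integer entries for every A ∈ Γ₁(5) has exactly 2 elements. -/

import Mathlib

open Matrix MatrixGroups CongruenceSubgroup

/-- A real 2×2 matrix has integer entries. -/
def IsIntegerMatrix (M : Matrix (Fin 2) (Fin 2) ℝ) : Prop :=
  ∀ i j, ∃ k : ℤ, M i j = (k : ℝ)

/-- The embedding `SL(2, ℤ) →* SL(2, ℝ)`. -/
noncomputable def toSL2R : SL(2, ℤ) →* SL(2, ℝ) :=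
  Matrix.SpecialLinearGroup.map (Int.castRingHom ℝ)

/-- `SL(2, ℤ)` as a subgroup of `SL(2, ℝ)`. -/
noncomputable def SL2ZinR : Subgroup SL(2, ℝ) := toSL2R.range

/-- The set of cosets `P·SL₂(ℤ)` in `SL₂(ℝ)/SL₂(ℤ)` such that `P⁻¹·A·P` has integer
entries for every `A ∈ G`; its cardinality is `N(G)`. -/
noncomputable def goodCosets (G : Subgroup SL(2, ℤ)) : Set (SL(2, ℝ) ⧸ SL2ZinR) :=
  {x | ∃ P : SL(2, ℝ), x = QuotientGroup.mk P ∧ ∀ A ∈ G,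
    IsIntegerMatrix ((P⁻¹ * toSL2R A * P : SL(2, ℝ)) : Matrix (Fin 2) (Fin 2) ℝ)}

/-!
For `P = !![x, y; r, s]`, integrality of `P⁻¹ T P` and `P⁻¹ !![1, 0; p, 1] P` already says that
`r², rs, s²` and `p x², p xy, p y²` are integers. A pair of reals whose pairwise products are
integers is `√n` times an integer vector: the ratio is rational, and writing the pair as `c (a, b)`
with `a, b` coprime, Bézout shows that `c²` is an integer. So `(r, s) = √D (a, b)` and
`√p (x, y) = √E (a', b')`, and squaring `√p · det P = √p` gives `D E (a' b - b' a)² = p`.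
Hence `{D, E} = {1, p}`: either `P` or `diag(√p, 1/√p) P` is integral. Conversely
`diag(1/√p, √p)` conjugates `Γ₀(p)` into `SL₂(ℤ)`, and it is not in `SL₂(ℤ)` since `√p` is
irrational.
-/

theorem IsCoprime.exists_int_of_mul_self_mul {c : ℝ} {a b : ℤ} (hab : IsCoprime a b)
    (ha : ∃ k : ℤ, c * c * (a * a) = k) (hb : ∃ k : ℤ, c * c * (b * b) = k) :
    ∃ n : ℤ, c * c = n := by
  obtain ⟨x, y, hxy⟩ := (hab.mul_left hab).mul_right (hab.mul_left hab)
  obtain ⟨ka, hka⟩ := ha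
  obtain ⟨kb, hkb⟩ := hb
  refine ⟨x * ka + y * kb, ?_⟩
  have hxy' : (x : ℝ) * (a * a) + y * (b * b) = 1 := by exact_mod_cast hxy
  push_cast
  rw [← hka, ← hkb]
  linear_combination -(c * c) * hxy'

theorem exists_isCoprime_eq_mul {r s : ℝ} (hrs : ∃ k : ℤ, r * s = k)
    (hss : ∃ k : ℤ, s * s = k) :
    ∃ (c : ℝ) (a b : ℤ), IsCoprime a b ∧ r = c * a ∧ s = c * b := by
  rcases eq_or_ne s 0 with rfl | hs
  · exact ⟨r, 1, 0, isCoprime_one_left, by simp, by simp⟩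
  obtain ⟨k, hk⟩ := hrs
  obtain ⟨m, hm⟩ := hss
  set q : ℚ := k / m
  refine ⟨s / q.den, q.num, q.den, Int.isCoprime_iff_gcd_eq_one.2 q.reduced, ?_, ?_⟩
  · have hr : r = s * q := by
      simp only [q, Rat.cast_div, Rat.cast_intCast, ← hk, ← hm]
      field_simp
    rw [hr, Rat.cast_def]
    ring
  · push_cast
    field_simp

theorem exists_eq_sqrt_mul_int {r s : ℝ} (hrr : ∃ k : ℤ, r * r = k)
    (hrs : ∃ k : ℤ, r * s = k) (hss : ∃ k : ℤ, s * s = k) :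
    ∃ (n : ℕ) (a b : ℤ), r = √n * a ∧ s = √n * b := by
  obtain ⟨c, a, b, hab, rfl, rfl⟩ := exists_isCoprime_eq_mul hrs hss
  obtain ⟨n, hn⟩ := hab.exists_int_of_mul_self_mul
    (by simpa only [mul_mul_mul_comm] using hrr) (by simpa only [mul_mul_mul_comm] using hss)
  lift n to ℕ using by exact_mod_cast hn ▸ mul_self_nonneg c
  have habs : √(n : ℝ) = |c| := by
    rw [← Real.sqrt_mul_self_eq_abs, hn, Int.cast_natCast]
  rcases abs_choice c with h | h
  · exact ⟨n, a, b, by rw [habs, h], by rw [habs, h]⟩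
  · exact ⟨n, -a, -b, by rw [habs, h]; push_cast; ring, by rw [habs, h]; push_cast; ring⟩

theorem natCast_mul_mul_sq_eq_of_det {p D E : ℕ} {x y r s : ℝ} {a b a' b' : ℤ}
    (hdet : x * s - y * r = 1) (hr : r = √D * a) (hs : s = √D * b) (hx : √p * x = √E * a')
    (hy : √p * y = √E * b') : ((D * E : ℕ) : ℤ) * (a' * b - b' * a) ^ 2 = p := by
  have hD := Real.mul_self_sqrt (Nat.cast_nonneg (α := ℝ) D)
  have hE := Real.mul_self_sqrt (Nat.cast_nonneg (α := ℝ) E)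
  have hp := Real.mul_self_sqrt (Nat.cast_nonneg (α := ℝ) p)
  suffices ((D * E : ℕ) : ℝ) * ((a' * b - b' * a : ℤ) : ℝ) ^ 2 = p by exact_mod_cast this
  calc ((D * E : ℕ) : ℝ) * ((a' * b - b' * a : ℤ) : ℝ) ^ 2
      = ((√E * a') * (√D * b) - (√E * b') * (√D * a)) ^ 2 := by
        push_cast
        linear_combination (-(E : ℝ) * (a' * b - b' * a) ^ 2) * hD
          - (√D * √D * (a' * b - b' * a) ^ 2) * hE
    _ = (p : ℝ) := by
        rw [← hx, ← hy, ← hr, ← hs]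
        linear_combination (x * s - y * r) ^ 2 * hp + p * (x * s - y * r + 1) * hdet

theorem Nat.Prime.eq_one_and_eq_or_of_mul_mul_sq {p d e : ℕ} (hp : p.Prime) {k : ℤ}
    (h : ((d * e : ℕ) : ℤ) * k ^ 2 = p) : d = 1 ∧ e = p ∨ d = p ∧ e = 1 := by
  have h' : d * e * k.natAbs ^ 2 = p := by
    simpa [Int.natAbs_mul, Int.natAbs_pow] using congrArg Int.natAbs h
  rcases Nat.prime_mul_iff.1 (h' ▸ hp) with ⟨hde, hk⟩ | ⟨hk, -⟩
  · rw [hk, mul_one] at h'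
    subst h'
    rcases Nat.prime_mul_iff.1 hde with ⟨-, rfl⟩ | ⟨-, rfl⟩ <;> simp
  · exact absurd hk.eq_one_of_pow (by norm_num)

theorem isIntegerMatrix_iff (M : Matrix (Fin 2) (Fin 2) ℝ) :
    IsIntegerMatrix M ↔ (∃ k : ℤ, M 0 0 = k) ∧ (∃ k : ℤ, M 0 1 = k) ∧
      (∃ k : ℤ, M 1 0 = k) ∧ (∃ k : ℤ, M 1 1 = k) := by
  simp only [IsIntegerMatrix, Fin.forall_fin_two, and_assoc]

theorem coe_toSL2R (A : SL(2, ℤ)) :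
    (toSL2R A : Matrix (Fin 2) (Fin 2) ℝ) = (A : Matrix (Fin 2) (Fin 2) ℤ).map (↑) := rfl

theorem mem_SL2ZinR_iff (P : SL(2, ℝ)) : P ∈ SL2ZinR ↔ IsIntegerMatrix P := by
  constructor
  · rintro ⟨A, rfl⟩ i j
    exact ⟨A i j, rfl⟩
  · intro h
    choose M hM using h
    have hMP : ((Matrix.of M).map (↑) : Matrix (Fin 2) (Fin 2) ℝ) = P := by
      ext i j
      exact (hM i j).symm
    have hdet : (Matrix.of M).det = 1 := by
      apply Int.cast_injective (α := ℝ)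
      rw [Int.cast_one, ← P.det_coe, ← hMP]
      exact (Int.castRingHom ℝ).map_det _
    exact ⟨⟨M, hdet⟩, Subtype.ext hMP⟩

section SL2

variable {R : Type*} [CommRing R]

theorem SL2_det_fin_two (P : SL(2, R)) : P 0 0 * P 1 1 - P 0 1 * P 1 0 = 1 :=
  (det_fin_two (P : Matrix (Fin 2) (Fin 2) R)).symm.trans P.det_coe

theorem coe_inv_mul_mul (P B : SL(2, R)) :
    ((P⁻¹ * B * P : SL(2, R)) : Matrix (Fin 2) (Fin 2) R) =
      !![P 1 1, -P 0 1; -P 1 0, P 0 0] * B * P := by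
  rw [Matrix.SpecialLinearGroup.coe_mul, Matrix.SpecialLinearGroup.coe_mul,
    Matrix.SpecialLinearGroup.SL2_inv_expl]
  rfl

end SL2

def lowerUnipotent (N : ℤ) : SL(2, ℤ) :=
  ⟨!![1, 0; N, 1], by simp [det_fin_two_of]⟩

theorem T_mem_Gamma1 (N : ℕ) : ModularGroup.T ∈ Gamma1 N := by
  simp [ModularGroup.coe_T]

theorem lowerUnipotent_mem_Gamma1 (N : ℕ) : lowerUnipotent N ∈ Gamma1 N := by
  rw [Gamma1_mem]
  simp [lowerUnipotent]

theorem coe_inv_mul_T_mul (P : SL(2, ℝ)) :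
    ((P⁻¹ * toSL2R ModularGroup.T * P : SL(2, ℝ)) : Matrix (Fin 2) (Fin 2) ℝ) =
      !![1 + P 1 0 * P 1 1, P 1 1 * P 1 1; -(P 1 0 * P 1 0), 1 - P 1 0 * P 1 1] := by
  have hdet := SL2_det_fin_two P
  have hT : (ModularGroup.T : Matrix (Fin 2) (Fin 2) ℤ).map ((↑) : ℤ → ℝ) = !![1, 1; 0, 1] := by
    rw [ModularGroup.coe_T]
    ext i j
    fin_cases i <;> fin_cases j <;> simp
  rw [coe_inv_mul_mul, coe_toSL2R, hT, eta_fin_two (P : Matrix (Fin 2) (Fin 2) ℝ), mul_fin_two,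
    mul_fin_two]
  ext i j
  fin_cases i <;> fin_cases j <;> simp <;> grind

theorem coe_inv_mul_lowerUnipotent_mul (P : SL(2, ℝ)) (N : ℤ) :
    ((P⁻¹ * toSL2R (lowerUnipotent N) * P : SL(2, ℝ)) : Matrix (Fin 2) (Fin 2) ℝ) =
      !![1 - N * (P 0 0 * P 0 1), -(N * (P 0 1 * P 0 1));
        N * (P 0 0 * P 0 0), 1 + N * (P 0 0 * P 0 1)] := by
  have hdet := SL2_det_fin_two P
  have hU : (lowerUnipotent N : Matrix (Fin 2) (Fin 2) ℤ).map ((↑) : ℤ → ℝ) =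
      !![1, 0; (N : ℝ), 1] := by
    ext i j
    fin_cases i <;> fin_cases j <;> simp [lowerUnipotent]
  rw [coe_inv_mul_mul, coe_toSL2R, hU, eta_fin_two (P : Matrix (Fin 2) (Fin 2) ℝ), mul_fin_two,
    mul_fin_two]
  ext i j
  fin_cases i <;> fin_cases j <;> simp <;> grind

section SqrtDiag

variable (N : ℕ) [NeZero N]

noncomputable def sqrtDiag : SL(2, ℝ) :=
  Matrix.SpecialLinearGroup.diag2 (√N)⁻¹ (by simp [NeZero.ne N])

theorem coe_sqrtDiag_inv_mul (P : SL(2, ℝ)) :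
    (((sqrtDiag N)⁻¹ * P : SL(2, ℝ)) : Matrix (Fin 2) (Fin 2) ℝ) =
      !![√N * P 0 0, √N * P 0 1; P 1 0 / √N, P 1 1 / √N] := by
  rw [sqrtDiag, Matrix.SpecialLinearGroup.diag2_inv, Matrix.SpecialLinearGroup.coe_mul,
    Matrix.SpecialLinearGroup.diag2_coe', eta_fin_two (P : Matrix (Fin 2) (Fin 2) ℝ), mul_fin_two]
  simp [div_eq_inv_mul]

theorem coe_sqrtDiag_inv_mul_mul (B : SL(2, ℝ)) :
    (((sqrtDiag N)⁻¹ * B * sqrtDiag N : SL(2, ℝ)) : Matrix (Fin 2) (Fin 2) ℝ) =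
      !![B 0 0, N * B 0 1; B 1 0 / N, B 1 1] := by
  rw [Matrix.SpecialLinearGroup.coe_mul, coe_sqrtDiag_inv_mul, sqrtDiag,
    Matrix.SpecialLinearGroup.diag2_coe', mul_fin_two]
  ext i j
  fin_cases i <;> fin_cases j <;> simp <;> field_simp <;> simp [NeZero.ne N, mul_comm]

theorem isIntegerMatrix_sqrtDiag_conj {A : SL(2, ℤ)} (hA : A ∈ Gamma0 N) :
    IsIntegerMatrix ((sqrtDiag N)⁻¹ * toSL2R A * sqrtDiag N : SL(2, ℝ)) := by
  obtain ⟨c, hc⟩ := (ZMod.intCast_zmod_eq_zero_iff_dvd _ N).1 (Gamma0_mem.1 hA)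
  rw [isIntegerMatrix_iff, coe_sqrtDiag_inv_mul_mul]
  simp only [coe_toSL2R, map_apply, of_apply, cons_val', cons_val_zero, cons_val_one,
    empty_val', cons_val_fin_one, hc]
  refine ⟨⟨A 0 0, rfl⟩, ⟨N * A 0 1, by push_cast; rfl⟩, ⟨c, ?_⟩, ⟨A 1 1, rfl⟩⟩
  push_cast
  field_simp [NeZero.ne N]

end SqrtDiag

section Prime

variable (p : ℕ) [Fact p.Prime]

theorem mem_SL2ZinR_or_sqrtDiag_inv_mul_mem (P : SL(2, ℝ))
    (hT : IsIntegerMatrix (P⁻¹ * toSL2R ModularGroup.T * P : SL(2, ℝ)))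
    (hU : IsIntegerMatrix (P⁻¹ * toSL2R (lowerUnipotent p) * P : SL(2, ℝ))) :
    P ∈ SL2ZinR ∨ (sqrtDiag p)⁻¹ * P ∈ SL2ZinR := by
  rw [isIntegerMatrix_iff, coe_inv_mul_T_mul] at hT
  rw [isIntegerMatrix_iff, coe_inv_mul_lowerUnipotent_mul] at hU
  simp only [of_apply, cons_val', cons_val_zero, cons_val_one, empty_val', cons_val_fin_one,
    Int.cast_natCast] at hT hU
  obtain ⟨⟨k₁, hk₁⟩, ⟨k₂, hk₂⟩, ⟨k₃, hk₃⟩, -⟩ := hT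
  obtain ⟨⟨l₁, hl₁⟩, ⟨l₂, hl₂⟩, ⟨l₃, hl₃⟩, -⟩ := hU
  have hsq : √p * √p = (p : ℝ) := Real.mul_self_sqrt (Nat.cast_nonneg p)
  have hdet := SL2_det_fin_two P
  obtain ⟨D, a, b, hr, hs⟩ := exists_eq_sqrt_mul_int (r := P 1 0) (s := P 1 1)
    ⟨-k₃, by push_cast; linarith⟩ ⟨k₁ - 1, by push_cast; linarith⟩ ⟨k₂, hk₂⟩
  obtain ⟨E, a', b', hp', hq'⟩ := exists_eq_sqrt_mul_int (r := √p * P 0 0) (s := √p * P 0 1)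
    ⟨l₃, by rw [mul_mul_mul_comm, hsq, hl₃]⟩
    ⟨1 - l₁, by push_cast; linear_combination P 0 0 * P 0 1 * hsq - hl₁⟩
    ⟨-l₂, by push_cast; linear_combination P 0 1 * P 0 1 * hsq - hl₂⟩
  have hp0 : √p ≠ 0 := by simp [NeZero.ne p]
  rcases (Fact.out : p.Prime).eq_one_and_eq_or_of_mul_mul_sq
    (natCast_mul_mul_sq_eq_of_det hdet hr hs hp' hq') with ⟨rfl, rfl⟩ | ⟨rfl, rfl⟩
  · left
    rw [Nat.cast_one, Real.sqrt_one] at hr hs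
    rw [mem_SL2ZinR_iff, isIntegerMatrix_iff]
    exact ⟨⟨a', mul_left_cancel₀ hp0 hp'⟩, ⟨b', mul_left_cancel₀ hp0 hq'⟩,
      ⟨a, by rw [hr, one_mul]⟩, ⟨b, by rw [hs, one_mul]⟩⟩
  · right
    rw [Nat.cast_one, Real.sqrt_one] at hp' hq'
    rw [mem_SL2ZinR_iff, isIntegerMatrix_iff, coe_sqrtDiag_inv_mul]
    simp only [of_apply, cons_val', cons_val_zero, cons_val_one, empty_val', cons_val_fin_one]
    exact ⟨⟨a', by rw [hp', one_mul]⟩, ⟨b', by rw [hq', one_mul]⟩,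
      ⟨a, by rw [hr, mul_div_cancel_left₀ _ hp0]⟩, ⟨b, by rw [hs, mul_div_cancel_left₀ _ hp0]⟩⟩

theorem goodCosets_Gamma1 :
    goodCosets (Gamma1 p) = {QuotientGroup.mk 1, QuotientGroup.mk (sqrtDiag p)} := by
  ext x
  constructor
  · rintro ⟨P, rfl, hP⟩
    rcases mem_SL2ZinR_or_sqrtDiag_inv_mul_mem p P (hP _ (T_mem_Gamma1 p))
      (hP _ (lowerUnipotent_mem_Gamma1 p)) with h | h
    · exact Or.inl (QuotientGroup.eq.2 (by simpa using inv_mem h))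
    · exact Or.inr (QuotientGroup.eq.2 (by simpa using inv_mem h))
  · rintro (rfl | rfl)
    · exact ⟨1, rfl, fun A _ => by simpa using (mem_SL2ZinR_iff _).1 ⟨A, rfl⟩⟩
    · exact ⟨sqrtDiag p, rfl, fun A hA => isIntegerMatrix_sqrtDiag_conj p (Gamma1_in_Gamma0 p hA)⟩

theorem sqrtDiag_notMem_SL2ZinR : sqrtDiag p ∉ SL2ZinR := by
  rw [mem_SL2ZinR_iff]
  intro h
  obtain ⟨k, hk⟩ := h 1 1
  rw [sqrtDiag, Matrix.SpecialLinearGroup.diag2_coe'] at hk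
  simp only [of_apply, cons_val', cons_val_one, empty_val', cons_val_fin_one, inv_inv] at hk
  exact (Fact.out : p.Prime).irrational_sqrt.ne_int k hk

theorem ncard_goodCosets_Gamma1 : (goodCosets (Gamma1 p)).ncard = 2 := by
  rw [goodCosets_Gamma1]
  refine Set.ncard_pair fun h => sqrtDiag_notMem_SL2ZinR p ?_
  simpa using QuotientGroup.eq.1 h

end Prime

/-- `N(Γ₁(5)) = 2`. -/
theorem stmt_17 : (goodCosets (Gamma1 5)).ncard = 2 := by
  have : Fact (Nat.Prime 5) := ⟨Nat.prime_five⟩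
  exact ncard_goodCosets_Gamma1 5
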